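/- Let S and F be semifilters such that S is strictly subcoherent to F. Then for any separable zero-dimensional metric space X, if X satisfies B(S) (every continuous image of X in ℕ^ℕ is ≤_S-bounded), then X satisfies B(F). -/

import Mathlib

open Set Filter Cardinal

/-- A semifilter: a nonempty family of infinite subsets of ℕ closed under
almost-supersets. -/
def SemifilterOn (F : Set (Set ℕ)) : Prop :=
  F.Nonempty ∧ (∀ A ∈ F, A.Infinite) ∧
    ∀ A ∈ F, ∀ B : Set ℕ, (A \ B).Finite → B ∈ F

/-- `f ≤_F g` : the set where `f ≤ g` belongs to `F`. -/
def LeSF (F : Set (Set ℕ)) (f g : ℕ → ℕ) : Prop := {n | f n ≤ g n} ∈ F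

/-- `Y` is bounded with respect to `≤_F`. -/
def BoundedSF (F : Set (Set ℕ)) (Y : Set (ℕ → ℕ)) : Prop :=
  ∃ g : ℕ → ℕ, ∀ f ∈ Y, LeSF F f g

/-- `b(F)` : the minimal cardinality of a `≤_F`-unbounded family in `ℕ^ℕ`. -/
noncomputable def bSF (F : Set (Set ℕ)) : Cardinal :=
  sInf {c : Cardinal | ∃ Y : Set (ℕ → ℕ), #Y = c ∧ ¬ BoundedSF F Y}

/-- `f ≤* g` : eventual domination. -/
def EvLe (f g : ℕ → ℕ) : Prop := ∀ᶠ n in Filter.atTop, f n ≤ g n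

/-- The union of all blocks `[h(n), h(n+1))` that `A` meets. -/
def BlocksOf (A : Set ℕ) (h : ℕ → ℕ) : Set ℕ :=
  ⋃ n ∈ {n | (A ∩ Set.Ico (h n) (h (n + 1))).Nonempty},
    Set.Ico (h n) (h (n + 1))

/-- `S` is strictly subcoherent to `F`. -/
def StrictSubcoherent (S F : Set (Set ℕ)) : Prop :=
  ∃ h : ℕ → ℕ, StrictMono h ∧ ∀ A ∈ S, BlocksOf A h ∈ F

/-- `X` satisfies `B(G)` : every continuous image of `X` in `ℕ^ℕ` is
`≤_G`-bounded. -/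
def BddImages (G : Set (Set ℕ)) (X : Type*) [TopologicalSpace X] : Prop :=
  ∀ Ψ : X → (ℕ → ℕ), Continuous Ψ → ∃ g : ℕ → ℕ, ∀ x, LeSF G (Ψ x) g

/-!
Let `h` witness strict subcoherence. For continuous `Ψ : X → ℕ^ℕ`, the map
`x ↦ (n ↦ max {Ψ x i : i < h (n + 1)})`, a cumulative form of `Φ_h`, is again continuous, so
`B(S)` gives a `≤_S`-bound `g` of it. Then `m ↦ max {g k : k < h (m + 1)}` bounds `Ψ` modulo `F`:
if the block of `m` meets `A = {k | max {Ψ x i : i < h (k + 1)} ≤ g k} ∈ S` at `k`, then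
`Ψ x m ≤ max {Ψ x i : i < h (k + 1)} ≤ g k ≤ max {g k' : k' < h (m + 1)}`, so the block-closure
of `A`, which lies in `F`, is contained in the set where the bound holds.
-/

lemma SemifilterOn.mem_of_subset {F : Set (Set ℕ)} (hF : SemifilterOn F) {A B : Set ℕ}
    (hA : A ∈ F) (hAB : A ⊆ B) : B ∈ F :=
  hF.2.2 A hA B (by simp [sdiff_eq_empty.mpr hAB])

def blockPrefixSup (h f : ℕ → ℕ) (n : ℕ) : ℕ := (Finset.range (h (n + 1))).sup f

lemma continuous_blockPrefixSup {X : Type*} [TopologicalSpace X] (h : ℕ → ℕ)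
    {Ψ : X → ℕ → ℕ} (hΨ : Continuous Ψ) :
    Continuous fun x => blockPrefixSup h (Ψ x) :=
  continuous_pi fun _ => Continuous.finset_sup_apply fun i _ => (continuous_apply i).comp hΨ

lemma le_blockPrefixSup_of_lt_of_le {h : ℕ → ℕ} (hh : StrictMono h) (f : ℕ → ℕ)
    {i n j : ℕ} (hi : i < h (n + 1)) (hnj : n ≤ j) : f i ≤ blockPrefixSup h f j :=
  Finset.le_sup (Finset.mem_range.mpr (hi.trans_le (hh.monotone (Nat.succ_le_succ hnj))))

lemma blocksOf_subset_le_blockPrefixSup {h : ℕ → ℕ} (hh : StrictMono h) (f g : ℕ → ℕ) :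
    BlocksOf {n | blockPrefixSup h f n ≤ g n} h ⊆ {m | f m ≤ blockPrefixSup h g m} := by
  intro m hm
  simp only [BlocksOf, mem_iUnion, mem_ofPred_eq] at hm
  obtain ⟨n, ⟨k, hk, hkn_lo, hkn_hi⟩, hmn_lo, hmn_hi⟩ := hm
  have hn_le : n ≤ h n := hh.le_apply
  calc f m ≤ blockPrefixSup h f k := le_blockPrefixSup_of_lt_of_le hh f hmn_hi (by omega)
    _ ≤ g k := hk
    _ ≤ blockPrefixSup h g m := le_blockPrefixSup_of_lt_of_le hh g hkn_hi (by omega)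

lemma LeSF.of_blockPrefixSup {S F : Set (Set ℕ)} (hF : SemifilterOn F) {h : ℕ → ℕ}
    (hh : StrictMono h) (hblocks : ∀ A ∈ S, BlocksOf A h ∈ F) {f g : ℕ → ℕ}
    (hle : LeSF S (blockPrefixSup h f) g) : LeSF F f (blockPrefixSup h g) :=
  hF.mem_of_subset (hblocks _ hle) (blocksOf_subset_le_blockPrefixSup hh f g)

theorem stmt_10_general (S F : Set (Set ℕ))
    (hF : SemifilterOn F) (hsub : StrictSubcoherent S F)
    (X : Type*) [MetricSpace X]
    (hBS : BddImages S X) :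
    BddImages F X := by
  obtain ⟨h, hh, hblocks⟩ := hsub
  intro Ψ hΨ
  obtain ⟨g, hg⟩ := hBS _ (continuous_blockPrefixSup h hΨ)
  exact ⟨blockPrefixSup h g, fun x => (hg x).of_blockPrefixSup hF hh hblocks⟩

/-- if `S` is strictly subcoherent to `F`, then `B(S)` implies
`B(F)` for every separable zero-dimensional metric space. -/
theorem stmt_10 (S F : Set (Set ℕ)) (hS : SemifilterOn S)
    (hF : SemifilterOn F) (hsub : StrictSubcoherent S F)
    (X : Type*) [MetricSpace X] [TopologicalSpace.SeparableSpace X]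
    [TotallyDisconnectedSpace X]
    (hBS : BddImages S X) :
    BddImages F X :=
  stmt_10_general S F hF hsub X hBS
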